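/- arXiv:1008.3091 — 2 statements merged into one kernel-verified Lean document; each statement's English description precedes it below -/
import Mathlib

section
/- Let G=(V,E) be a finite connected simple graph with radius R(G) ≥ 1, let c ∈ C(G), let y ∈ V satisfy d_G(c,y) = R(G), and let γ be a shortest path from c to y. Call a vertex z 'good' if z ≠ y, every shortest path μ from c to z satisfies γ ∩ μ = {c}, and R(G) − 1 ≤ d_G(c,z) ≤ R(G). Then either there exists a good vertex z with d_G(c,z) = R(G), or every good vertex z satisfies d_G(c,z) = R(G) − 1 and there exists a good vertex z₀ such that every path μ from c to z₀ of length d_G(c,z₀) + 1 satisfies γ ∩ μ = {c}. -/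
open SimpleGraph

noncomputable def eccentr {V : Type} (G : SimpleGraph V) (x : V) : ℕ :=
  sSup (Set.range (G.dist x))

noncomputable def grRadius {V : Type} (G : SimpleGraph V) : ℕ :=
  sInf (Set.range (eccentr G))

def ncontract {V : Type} (G : SimpleGraph V) (x : V) :
    SimpleGraph {v : V // ¬ G.Adj x v} where
  Adj a b := G.Adj a.1 b.1 ∨
    (a.1 = x ∧ b.1 ≠ x ∧ ∃ y, G.Adj x y ∧ G.Adj y b.1) ∨
    (b.1 = x ∧ a.1 ≠ x ∧ ∃ y, G.Adj x y ∧ G.Adj y a.1)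
  symm.symm a b h := by
    rcases h with h | h | h
    · exact Or.inl h.symm
    · exact Or.inr (Or.inr h)
    · exact Or.inr (Or.inl h)
  loopless.irrefl a h := by
    rcases h with h | ⟨h1, h2, -⟩ | ⟨h1, h2, -⟩
    · exact G.loopless.irrefl _ h
    · exact h2 h1
    · exact h2 h1

/-- A vertex `z` is *good* (with respect to the center `c`, the far vertex `y` and the
shortest path `γ` from `c` to `y`) if `z ≠ y`, every shortest path `μ` from `c` to `z`
meets `γ` only at `c`, and `R(G) - 1 ≤ d(c,z) ≤ R(G)`. -/
def Good {V : Type} (G : SimpleGraph V) {c y : V} (γ : G.Walk c y) (z : V) : Prop :=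
  z ≠ y ∧
    (∀ μ : G.Walk c z, μ.IsPath → μ.length = G.dist c z →
      ∀ v ∈ γ.support, v ∈ μ.support → v = c) ∧
    grRadius G - 1 ≤ G.dist c z ∧ G.dist c z ≤ grRadius G

/-!
Let `v₁` be the successor of `c` on `γ` and let `w` be a vertex farthest from `v₁`, so that
`d(v₁,w) = r(v₁) ≥ R`. Since `γ` is a geodesic through `v₁`, every vertex `v ≠ c` of `γ`
satisfies `d(v₁,v) < d(c,v)`; hence a walk from `c` to `w` of length `ℓ` through such a `v`
would give `d(v₁,w) ≤ d(v₁,v) + d(v,w) < d(c,v) + d(v,w) ≤ ℓ`. So every walk from `c` to `w`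
of length at most `R` meets `γ` only at `c`. This makes `w` good, and if no good vertex lies at
distance `R` then `d(c,w) = R - 1`, so the walks of length `d(c,w) + 1` are covered as well.
-/

namespace SimpleGraph

variable {V : Type} {G : SimpleGraph V}

theorem dist_add_dist_le_length {u v w : V} (p : G.Walk u w) (hv : v ∈ p.support) :
    G.dist u v + G.dist v w ≤ p.length := by
  classical
  rw [← p.take_spec hv, Walk.length_append]
  exact add_le_add (dist_le _) (dist_le _)

theorem dist_le_eccentr [Finite V] (x z : V) : G.dist x z ≤ eccentr G x :=
  le_csSup (Set.finite_range _).bddAbove ⟨z, rfl⟩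

theorem exists_eccentr_eq_dist [Finite V] (x : V) : ∃ w, eccentr G x = G.dist x w := by
  obtain ⟨w, hw⟩ :=
    Nat.sSup_mem (s := Set.range (G.dist x)) ⟨_, x, rfl⟩ (Set.finite_range _).bddAbove
  exact ⟨w, hw.symm⟩

theorem grRadius_le_eccentr (x : V) : grRadius G ≤ eccentr G x :=
  Nat.sInf_le ⟨x, rfl⟩

section Geodesic

variable {c v₁ y : V} {γ : G.Walk v₁ y}

theorem dist_add_one_le_of_mem_support_tail (hadj : G.Adj c v₁)
    (hγ : γ.length + 1 = G.dist c y) {v : V} (hv : v ∈ γ.support) :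
    G.dist v₁ v + 1 ≤ G.dist c v := by
  classical
  have hγv := dist_add_dist_le_length γ hv
  have hcv : G.Reachable c v := hadj.reachable.trans (γ.takeUntil v hv).reachable
  have := hcv.dist_triangle_left y
  omega

theorem eq_of_mem_support_cons_of_length_le (hadj : G.Adj c v₁)
    (hγ : γ.length + 1 = G.dist c y) {w : V} (μ : G.Walk c w)
    (hμ : μ.length ≤ G.dist v₁ w) :
    ∀ v ∈ (Walk.cons hadj γ).support, v ∈ μ.support → v = c := by
  classical
  intro v hv hvμ
  rw [Walk.support_cons, List.mem_cons] at hv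
  rcases hv with rfl | hv
  · rfl
  exfalso
  have hv₁v := dist_add_one_le_of_mem_support_tail hadj hγ hv
  have hμv := dist_add_dist_le_length μ hvμ
  have := (γ.takeUntil v hv).reachable.dist_triangle_left w
  omega

theorem exists_good_forall_walk_length_le [Finite V] (hadj : G.Adj c v₁)
    (hc : eccentr G c = grRadius G) (hγ : γ.length + 1 = G.dist c y)
    (hy : G.dist c y = grRadius G) :
    ∃ w, Good G (Walk.cons hadj γ) w ∧ ∀ μ : G.Walk c w, μ.length ≤ grRadius G →
      ∀ v ∈ (Walk.cons hadj γ).support, v ∈ μ.support → v = c := by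
  obtain ⟨w, hw⟩ := exists_eccentr_eq_dist (G := G) v₁
  have hRw : grRadius G ≤ G.dist v₁ w := hw ▸ grRadius_le_eccentr v₁
  have hcw : G.dist c w ≤ grRadius G := hc ▸ dist_le_eccentr c w
  have hwy : w ≠ y := by
    rintro rfl
    have := dist_le γ
    omega
  have hv₁c : G.dist v₁ c = 1 := dist_eq_one_iff_adj.mpr hadj.symm
  have hv₁w := hadj.symm.reachable.dist_triangle_left w
  have hmeet : ∀ μ : G.Walk c w, μ.length ≤ grRadius G →
      ∀ v ∈ (Walk.cons hadj γ).support, v ∈ μ.support → v = c :=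
    fun μ hμ ↦ eq_of_mem_support_cons_of_length_le hadj hγ μ (by omega)
  exact ⟨w, ⟨hwy, fun μ _ hμ ↦ hmeet μ (by omega), by omega, hcw⟩, hmeet⟩

end Geodesic

end SimpleGraph

theorem stmt_2_general {V : Type} [Fintype V] (G : SimpleGraph V)
    (hR : 1 ≤ grRadius G) (c y : V) (hc : eccentr G c = grRadius G)
    (hy : G.dist c y = grRadius G) (γ : G.Walk c y)
    (hγl : γ.length = grRadius G) :
    (∃ z : V, Good G γ z ∧ G.dist c z = grRadius G) ∨
    ((∀ z : V, Good G γ z → G.dist c z = grRadius G - 1) ∧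
      ∃ z₀ : V, Good G γ z₀ ∧
        ∀ μ : G.Walk c z₀, μ.IsPath → μ.length = G.dist c z₀ + 1 →
          ∀ v ∈ γ.support, v ∈ μ.support → v = c) := by
  cases γ with
  | nil => simp only [Walk.length_nil] at hγl; omega
  | cons hadj γ =>
    obtain ⟨w, hw, hmeet⟩ :=
      exists_good_forall_walk_length_le hadj hc (by simpa using hγl.trans hy.symm) hy
    by_cases hfar : ∃ z, Good G (Walk.cons hadj γ) z ∧ G.dist c z = grRadius G
    · exact Or.inl hfar
    push Not at hfar
    have hnear : ∀ z, Good G (Walk.cons hadj γ) z → G.dist c z = grRadius G - 1 :=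
      fun z hz ↦ by have := hz.2.2; have := hfar z hz; omega
    exact Or.inr ⟨hnear, w, hw, fun μ _ hμ ↦ hmeet μ (by have := hnear w hw; omega)⟩

theorem stmt_2 {V : Type} [Fintype V] (G : SimpleGraph V) (hconn : G.Connected)
    (hR : 1 ≤ grRadius G) (c y : V) (hc : eccentr G c = grRadius G)
    (hy : G.dist c y = grRadius G) (γ : G.Walk c y) (hγp : γ.IsPath)
    (hγl : γ.length = grRadius G) :
    (∃ z : V, Good G γ z ∧ G.dist c z = grRadius G) ∨
    ((∀ z : V, Good G γ z → G.dist c z = grRadius G - 1) ∧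
      ∃ z₀ : V, Good G γ z₀ ∧
        ∀ μ : G.Walk c z₀, μ.IsPath → μ.length = G.dist c z₀ + 1 →
          ∀ v ∈ γ.support, v ∈ μ.support → v = c) :=
  stmt_2_general G hR c y hc hy γ hγl
end

section
/- Let G=(V,E) be a finite connected simple graph and let c ∈ C(G) be a center vertex. Define the sequence of graphs G₀ = G and G_{i+1} = G_i / c (the neighborhood contraction of G_i at c; note c remains a vertex of each G_i). Then for every k with 0 ≤ k ≤ R(G), the graph G_k has radius R(G) − k; in particular, G_{R(G)} has exactly one vertex. -/
open SimpleGraph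

/-- Iterated neighborhood contraction, keeping track of the ambient vertex type,
the current graph and the distinguished vertex `c` (which always survives each
contraction as the merged vertex). `iterC G c k` is `(Gₖ, c)` where `G₀ = G` and
`Gᵢ₊₁ = Gᵢ / c`. -/
def iterC {V : Type} (G : SimpleGraph V) (c : V) : ℕ → Σ W : Type, SimpleGraph W × W
  | 0 => ⟨V, G, c⟩
  | k + 1 =>
      let s := iterC G c k
      ⟨{v : s.1 // ¬ s.2.1.Adj s.2.2 v}, ncontract s.2.1 s.2.2, ⟨s.2.2, s.2.1.loopless.irrefl _⟩⟩

/-!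
Contracting the neighbourhood of `x` lowers the distance from `x` to every other vertex by
exactly one, so the eccentricity of `x` drops by one. A geodesic of `H / x` either avoids `x`,
and is then a walk of `H`, or passes through `x`; hence
`d'(u, z) ≥ min (d(u, z), d'(u, x) + d'(x, z))`.
If every eccentricity in `H` is at least `R`, take `q` the first step from `u` towards `x` and
`z` with `d(q, z) ≥ R`: either `z` is near `x`, and then `u` is far from `x`, or both terms of
the minimum are at least `R - 1`. So contracting at a centre lowers the radius by exactly one
and keeps `c` central, and after `R(G)` steps `c` has eccentricity `0`.
-/

section Eccentricity

variable {W : Type} (G : SimpleGraph W)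

lemma dist_le_eccentr [Finite W] (u v : W) : G.dist u v ≤ eccentr G u :=
  le_csSup (Set.finite_range _).bddAbove (Set.mem_range_self v)

lemma exists_dist_eq_eccentr [Finite W] (u : W) : ∃ v, G.dist u v = eccentr G u :=
  Nat.sSup_mem ⟨_, Set.mem_range_self u⟩ (Set.finite_range _).bddAbove

lemma le_eccentr_iff [Finite W] {u : W} {n : ℕ} :
    n ≤ eccentr G u ↔ ∃ v, n ≤ G.dist u v := by
  refine ⟨fun h => ?_, fun ⟨v, hv⟩ => hv.trans (dist_le_eccentr G u v)⟩
  obtain ⟨v, hv⟩ := exists_dist_eq_eccentr G u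
  exact ⟨v, hv ▸ h⟩

lemma eccentr_le_iff [Finite W] {u : W} {n : ℕ} :
    eccentr G u ≤ n ↔ ∀ v, G.dist u v ≤ n := by
  refine ⟨fun h v => (dist_le_eccentr G u v).trans h, fun h => ?_⟩
  obtain ⟨v, hv⟩ := exists_dist_eq_eccentr G u
  exact hv ▸ h v

lemma grRadius_eq_of_eccentr_le {n : ℕ} {u : W} (hu : eccentr G u ≤ n)
    (h : ∀ v, n ≤ eccentr G v) : grRadius G = n :=
  le_antisymm ((Nat.sInf_le (Set.mem_range_self u)).trans hu)
    (le_csInf ⟨_, u, rfl⟩ (by rintro _ ⟨v, rfl⟩; exact h v))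

variable {G}

lemma SimpleGraph.Connected.card_eq_one_of_eccentr_eq_zero [Finite W] (hG : G.Connected) {u : W}
    (hu : eccentr G u = 0) : Nat.card W = 1 :=
  Nat.card_eq_one_iff_exists.mpr ⟨u, fun v =>
    (hG.dist_eq_zero_iff.mp (Nat.le_zero.mp ((eccentr_le_iff G).mp hu.le v))).symm⟩

lemma SimpleGraph.Reachable.exists_adj_dist_lt {u v : W} (hr : G.Reachable u v) (hne : u ≠ v) :
    ∃ w, G.Adj u w ∧ G.dist w v < G.dist u v := by
  obtain ⟨p, hp⟩ := hr.exists_walk_length_eq_dist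
  cases p with
  | nil => exact absurd rfl hne
  | cons h p =>
    have := dist_le p
    rw [Walk.length_cons] at hp
    exact ⟨_, h, by omega⟩

end Eccentricity

section Contraction

variable {W : Type} (H : SimpleGraph W) (x : W)

def mergedVertex : {v : W // ¬ H.Adj x v} := ⟨x, H.loopless.irrefl x⟩

open Classical in
noncomputable def ncontractProj (v : W) : {v : W // ¬ H.Adj x v} :=
  if h : H.Adj x v then mergedVertex H x else ⟨v, h⟩

variable {H x}

lemma ncontractProj_of_adj {v : W} (h : H.Adj x v) : ncontractProj H x v = mergedVertex H x :=
  dif_pos h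

lemma ncontractProj_val (v : {v : W // ¬ H.Adj x v}) : ncontractProj H x v.1 = v :=
  dif_neg v.2

lemma ncontractProj_eq_or_adj {a b : W} (h : H.Adj a b) :
    ncontractProj H x a = ncontractProj H x b ∨
      (ncontract H x).Adj (ncontractProj H x a) (ncontractProj H x b) := by
  unfold ncontractProj
  split_ifs with ha hb hb
  · exact Or.inl rfl
  · by_cases hbx : b = x
    · exact Or.inl (Subtype.ext hbx.symm)
    · exact Or.inr (Or.inr (Or.inl ⟨rfl, hbx, a, ha, h⟩))
  · by_cases hax : a = x
    · exact Or.inl (Subtype.ext hax)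
    · exact Or.inr (Or.inr (Or.inr ⟨rfl, hax, b, hb, h.symm⟩))
  · exact Or.inr (Or.inl h)

lemma exists_walk_ncontractProj {a b : W} (p : H.Walk a b) :
    ∃ q : (ncontract H x).Walk (ncontractProj H x a) (ncontractProj H x b),
      q.length ≤ p.length := by
  induction p with
  | nil => exact ⟨.nil, le_rfl⟩
  | cons h p ih =>
    obtain ⟨q, hq⟩ := ih
    rw [Walk.length_cons]
    rcases ncontractProj_eq_or_adj h with heq | hadj
    · exact ⟨q.copy heq.symm rfl, by rw [Walk.length_copy]; omega⟩
    · exact ⟨.cons hadj q, by rw [Walk.length_cons]; omega⟩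

lemma dist_ncontractProj_le {a b : W} (hr : H.Reachable a b) :
    (ncontract H x).dist (ncontractProj H x a) (ncontractProj H x b) ≤ H.dist a b := by
  obtain ⟨p, hp⟩ := hr.exists_walk_length_eq_dist
  obtain ⟨q, hq⟩ := exists_walk_ncontractProj (x := x) p
  exact (dist_le q).trans (hp ▸ hq)

lemma ncontract_connected (hH : H.Connected) : (ncontract H x).Connected := by
  have : Nonempty {v : W // ¬ H.Adj x v} := ⟨mergedVertex H x⟩
  refine Connected.mk fun a b => ?_
  obtain ⟨p⟩ := hH a.1 b.1
  obtain ⟨q, -⟩ := exists_walk_ncontractProj (x := x) p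
  rw [ncontractProj_val, ncontractProj_val] at q
  exact ⟨q⟩

lemma exists_walk_of_mergedVertex_notMem_support {a b : {v : W // ¬ H.Adj x v}}
    (p : (ncontract H x).Walk a b) (hp : mergedVertex H x ∉ p.support) :
    ∃ q : H.Walk a.1 b.1, q.length = p.length := by
  induction p with
  | nil => exact ⟨.nil, rfl⟩
  | @cons a m b h p ih =>
    simp only [Walk.support_cons, List.mem_cons, not_or] at hp
    obtain ⟨q, hq⟩ := ih hp.2
    have hadj : H.Adj a.1 m.1 := by
      rcases h with h | ⟨hax, -⟩ | ⟨hmx, -⟩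
      · exact h
      · exact absurd (Subtype.ext hax).symm hp.1
      · have : m = mergedVertex H x := Subtype.ext hmx
        exact absurd (this ▸ p.start_mem_support) hp.2
    exact ⟨.cons hadj q, by rw [Walk.length_cons, Walk.length_cons, hq]⟩

lemma dist_ncontract_mergedVertex_add_one (hH : H.Connected) (b : {v : W // ¬ H.Adj x v})
    (hb : b.1 ≠ x) : (ncontract H x).dist (mergedVertex H x) b + 1 = H.dist x b.1 := by
  apply le_antisymm
  · obtain ⟨w, hxw, hw⟩ := (hH x b.1).exists_adj_dist_lt (Ne.symm hb)
    have := dist_ncontractProj_le (x := x) (hH w b.1)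
    rw [ncontractProj_of_adj hxw, ncontractProj_val] at this
    omega
  · obtain ⟨p, hp, hlen⟩ := (ncontract_connected hH).exists_path_of_dist (mergedVertex H x) b
    cases p with
    | nil => exact absurd rfl hb
    | @cons _ m _ h q =>
      obtain ⟨-, hxq⟩ := (Walk.cons_isPath_iff _ _).mp hp
      obtain ⟨q', hq'⟩ := exists_walk_of_mergedVertex_notMem_support q hxq
      have hxm : H.dist x m.1 ≤ 2 := by
        rcases h with h | ⟨-, -, y, hxy, hym⟩ | ⟨hmx, -⟩
        · exact absurd h m.2
        · simpa using dist_le (Walk.cons hxy hym.toWalk)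
        · simp [hmx]
      have := dist_le q'
      have := hH.dist_triangle (u := x) (v := m.1) (w := b.1)
      rw [Walk.length_cons] at hlen
      omega

lemma min_le_dist_ncontract (hH : H.Connected) (a b : {v : W // ¬ H.Adj x v}) :
    min (H.dist a.1 b.1)
      ((ncontract H x).dist a (mergedVertex H x) + (ncontract H x).dist (mergedVertex H x) b) ≤
      (ncontract H x).dist a b := by
  classical
  obtain ⟨p, hp⟩ := (ncontract_connected hH).exists_walk_length_eq_dist a b
  rw [← hp]
  by_cases hm : mergedVertex H x ∈ p.support
  · refine min_le_of_right_le ?_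
    calc _ ≤ (p.takeUntil _ hm).length + (p.dropUntil _ hm).length :=
          add_le_add (dist_le _) (dist_le _)
      _ = p.length := by rw [← Walk.length_append, p.take_spec hm]
  · obtain ⟨q, hq⟩ := exists_walk_of_mergedVertex_notMem_support p hm
    exact min_le_of_left_le (hq ▸ dist_le q)

lemma eccentr_ncontract_mergedVertex [Finite W] (hH : H.Connected) :
    eccentr (ncontract H x) (mergedVertex H x) = eccentr H x - 1 := by
  apply le_antisymm
  · rw [eccentr_le_iff]
    intro b
    by_cases hb : b.1 = x
    · rw [show b = mergedVertex H x from Subtype.ext hb, dist_self]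
      exact Nat.zero_le _
    · have := dist_ncontract_mergedVertex_add_one hH b hb
      have := dist_le_eccentr H x b.1
      omega
  · obtain ⟨b, hb⟩ := exists_dist_eq_eccentr H x
    by_cases hxb : H.dist x b ≤ 1
    · omega
    · have hnadj : ¬ H.Adj x b := fun h => hxb (dist_eq_one_iff_adj.mpr h).le
      have hbx : b ≠ x := by rintro rfl; simp at hxb
      lift b to {v : W // ¬ H.Adj x v} using hnadj
      have := dist_ncontract_mergedVertex_add_one hH b hbx
      have := dist_le_eccentr (ncontract H x) (mergedVertex H x) b
      omega

lemma le_eccentr_ncontract [Finite W] (hH : H.Connected) {R : ℕ} (hR : ∀ v, R ≤ eccentr H v)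
    (u : {v : W // ¬ H.Adj x v}) : R - 1 ≤ eccentr (ncontract H x) u := by
  by_cases hux : u.1 = x
  · rw [show u = mergedVertex H x from Subtype.ext hux, eccentr_ncontract_mergedVertex hH]
    exact Nat.sub_le_sub_right (hR x) 1
  have hut : (ncontract H x).dist u (mergedVertex H x) + 1 = H.dist u.1 x := by
    rw [dist_comm, dist_ncontract_mergedVertex_add_one hH u hux, dist_comm]
  obtain ⟨q, huq, hqx⟩ := (hH u.1 x).exists_adj_dist_lt hux
  obtain ⟨z, hz⟩ := (le_eccentr_iff H).mp (hR q)
  have hqz := hH.dist_triangle (u := q) (v := x) (w := z)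
  rw [le_eccentr_iff]
  by_cases hxz : H.dist x z ≤ 1
  · exact ⟨mergedVertex H x, by omega⟩
  · have hnadj : ¬ H.Adj x z := fun h => hxz (dist_eq_one_iff_adj.mpr h).le
    have hzx : z ≠ x := by rintro rfl; simp at hxz
    lift z to {v : W // ¬ H.Adj x v} using hnadj
    refine ⟨z, le_trans (le_min ?_ ?_) (min_le_dist_ncontract hH u z)⟩
    · have := hH.dist_triangle (u := q) (v := u.1) (w := z)
      have := dist_eq_one_iff_adj.mpr huq.symm
      omega
    · have := dist_ncontract_mergedVertex_add_one hH z hzx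
      omega

end Contraction

section Iteration

variable {V : Type} (G : SimpleGraph V) (c : V)

instance iterC_finite [Finite V] (k : ℕ) : Finite (iterC G c k).1 := by
  induction k with
  | zero => exact inferInstanceAs (Finite V)
  | succ k ih => exact inferInstanceAs (Finite {v // ¬ (iterC G c k).2.1.Adj (iterC G c k).2.2 v})

lemma iterC_invariant [Finite V] (hG : G.Connected) {R : ℕ} (hc : eccentr G c ≤ R)
    (hR : ∀ v, R ≤ eccentr G v) (k : ℕ) :
    (iterC G c k).2.1.Connected ∧ eccentr (iterC G c k).2.1 (iterC G c k).2.2 ≤ R - k ∧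
      ∀ v, R - k ≤ eccentr (iterC G c k).2.1 v := by
  induction k with
  | zero => exact ⟨hG, hc, hR⟩
  | succ k ih =>
    obtain ⟨hconn, hecc, hlb⟩ := ih
    refine ⟨ncontract_connected hconn, ?_, fun v => ?_⟩
    · change eccentr (ncontract _ _) (mergedVertex _ _) ≤ _
      rw [eccentr_ncontract_mergedVertex hconn]
      omega
    · rw [← Nat.sub_sub]
      exact le_eccentr_ncontract hconn hlb v

end Iteration

theorem stmt_11 {V : Type} [Fintype V] (G : SimpleGraph V) (hconn : G.Connected)
    (c : V) (hc : eccentr G c = grRadius G) :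
    (∀ k ≤ grRadius G, grRadius (iterC G c k).2.1 = grRadius G - k) ∧
      Nat.card (iterC G c (grRadius G)).1 = 1 := by
  have hR : ∀ v, grRadius G ≤ eccentr G v := fun v => Nat.sInf_le ⟨v, rfl⟩
  have key := iterC_invariant G c hconn hc.le hR
  refine ⟨fun k _ => ?_, ?_⟩
  · obtain ⟨-, hecc, hlb⟩ := key k
    exact grRadius_eq_of_eccentr_le _ hecc hlb
  · obtain ⟨hconn', hecc, -⟩ := key (grRadius G)
    exact hconn'.card_eq_one_of_eccentr_eq_zero (Nat.le_zero.mp (hecc.trans_eq (Nat.sub_self _)))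
end
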